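/- For i ∈ {1,…,n}, let r̲ᵢ, r̄ᵢ : ℓ∞^{n-1} → ℝ be bounded 1-Lipschitz maps with r̲ᵢ ≤ r̄ᵢ. Then the set Q = { x ∈ ℓ∞^n | r̲ᵢ(x̂ᵢ) ≤ xᵢ ≤ r̄ᵢ(x̂ᵢ) for all i } is nonempty and compact. -/

import Mathlib

/-!
The set is the fixed-point set of the 1-Lipschitz map that clamps each coordinate `xᵢ` between
`r̲ᵢ(x̂ᵢ)` and `r̄ᵢ(x̂ᵢ)`. This map sends everything into the box `[l, u]ⁿ`, so its fixed points
form a closed subset of the box. A 1-Lipschitz self-map `f` of a compact convex set `K` has a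
fixed point: the contractions `x ↦ p + t • (f x - p)`, `t < 1`, have fixed points whose
displacement under `f` is at most `(1 - t) · diam K`, and the continuous function
`x ↦ dist (f x) x` attains its minimum on `K`, which must therefore be `0`.
-/

open Set Function NNReal

theorem LipschitzWith.pi {α ι : Type*} [PseudoEMetricSpace α] [Fintype ι] {β : ι → Type*}
    [∀ i, PseudoEMetricSpace (β i)] {K : ℝ≥0} {f : α → ∀ i, β i}
    (hf : ∀ i, LipschitzWith K fun a => f a i) : LipschitzWith K f :=
  fun x y => edist_pi_le_iff.2 fun i => hf i x y

theorem Pi.lipschitzWith_precomp {ι κ : Type*} [Fintype ι] [Fintype κ] (σ : κ → ι) :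
    LipschitzWith 1 fun x : ι → ℝ => x ∘ σ :=
  LipschitzWith.pi fun j => LipschitzWith.eval (σ j)

section FixedPoint

variable {E : Type*} [NormedAddCommGroup E] [NormedSpace ℝ E] {K : Set E} {f : E → E}

theorem LipschitzWith.exists_dist_apply_self_le (hKc : IsCompact K) (hKv : Convex ℝ K)
    (hf : LipschitzWith 1 f) (hfK : MapsTo f K K) {p : E} (hp : p ∈ K) {t : ℝ}
    (ht₀ : 0 ≤ t) (ht₁ : t < 1) : ∃ z ∈ K, dist (f z) z ≤ (1 - t) * Metric.diam K := by
  set g : E → E := fun x => p + t • (f x - p)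
  have hgK : MapsTo g K K := fun x hx => hKv.add_smul_sub_mem hp (hfK hx) ⟨ht₀, ht₁.le⟩
  have hg : LipschitzWith ⟨t, ht₀⟩ g := LipschitzWith.of_dist_le_mul fun x y => by
    simp only [g, dist_add_left, dist_smul₀, dist_sub_right, Real.norm_of_nonneg ht₀]
    exact mul_le_mul_of_nonneg_left (by simpa using hf.dist_le_mul x y) ht₀
  have hgc : ContractingWith ⟨t, ht₀⟩ (hgK.restrict g K K) :=
    ⟨ht₁, hgK.lipschitzOnWith_iff_restrict.1 hg.lipschitzOnWith⟩
  obtain ⟨z, hzK, hz, -⟩ := hgc.exists_fixedPoint' hKc.isComplete hgK hp (edist_ne_top _ _)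
  refine ⟨z, hzK, ?_⟩
  have hdisp : f z - z = (1 - t) • (f z - p) :=
    calc f z - z = f z - (p + t • (f z - p)) := congrArg (f z - ·) hz.eq.symm
      _ = (1 - t) • (f z - p) := by module
  rw [dist_eq_norm, hdisp, norm_smul, Real.norm_of_nonneg (by linarith), ← dist_eq_norm]
  exact mul_le_mul_of_nonneg_left (Metric.dist_le_diam_of_mem hKc.isBounded (hfK hzK) hp)
    (by linarith)

theorem LipschitzWith.exists_isFixedPt_of_isCompact_of_convex (hKc : IsCompact K)
    (hKv : Convex ℝ K) (hKne : K.Nonempty) (hf : LipschitzWith 1 f) (hfK : MapsTo f K K) :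
    ∃ x ∈ K, IsFixedPt f x := by
  obtain ⟨p, hp⟩ := hKne
  obtain ⟨x, hxK, hmin⟩ :=
    hKc.exists_isMinOn ⟨p, hp⟩ (hf.continuous.dist continuous_id).continuousOn
  refine ⟨x, hxK, dist_le_zero.1 (le_of_forall_pos_le_add fun ε hε => ?_)⟩
  set D := Metric.diam K
  have hD : 0 ≤ D := Metric.diam_nonneg
  have hDε : 0 < D + ε := by positivity
  obtain ⟨z, hzK, hz⟩ := hf.exists_dist_apply_self_le hKc hKv hfK hp
    (div_nonneg hD hDε.le) ((div_lt_one hDε).2 (by linarith))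
  have hεD : (1 - D / (D + ε)) * D ≤ ε := by
    rw [one_sub_div hDε.ne', add_sub_cancel_left, div_mul_eq_mul_div, div_le_iff₀ hDε]
    nlinarith
  rw [zero_add]
  exact (hmin hzK).trans (hz.trans hεD)

end FixedPoint

section BoundSystem

variable {ι : Type*} {a b : ι → (ι → ℝ) → ℝ}

def clampMap (a b : ι → (ι → ℝ) → ℝ) (x : ι → ℝ) : ι → ℝ :=
  fun i => max (a i x) (min (x i) (b i x))

theorem lipschitzWith_clampMap [Fintype ι] (ha : ∀ i, LipschitzWith 1 (a i))
    (hb : ∀ i, LipschitzWith 1 (b i)) : LipschitzWith 1 (clampMap a b) :=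
  LipschitzWith.pi fun i => by
    simpa [clampMap] using (ha i).max ((LipschitzWith.eval i).min (hb i))

theorem clampMap_mem_univ_pi_Icc (hle : ∀ i x, a i x ≤ b i x) {l u : ℝ}
    (hbdd : ∀ i x, l ≤ a i x ∧ b i x ≤ u) (x : ι → ℝ) :
    clampMap a b x ∈ univ.pi fun _ => Icc l u := fun i _ =>
  ⟨(hbdd i x).1.trans (le_max_left _ _),
    max_le ((hle i x).trans (hbdd i x).2) ((min_le_right _ _).trans (hbdd i x).2)⟩

theorem isFixedPt_clampMap_iff (hle : ∀ i x, a i x ≤ b i x) {x : ι → ℝ} :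
    IsFixedPt (clampMap a b) x ↔ ∀ i, a i x ≤ x i ∧ x i ≤ b i x := by
  refine funext_iff.trans (forall_congr' fun i => ⟨fun h => ?_, fun h => ?_⟩)
  · rw [← h]
    exact ⟨le_max_left _ _, max_le (hle i x) (min_le_right _ _)⟩
  · simp only [clampMap, min_eq_left h.2, max_eq_right h.1]

theorem nonempty_and_isCompact_setOf_bounds [Fintype ι] (ha : ∀ i, LipschitzWith 1 (a i))
    (hb : ∀ i, LipschitzWith 1 (b i)) (hle : ∀ i x, a i x ≤ b i x) {l u : ℝ}
    (hbdd : ∀ i x, l ≤ a i x ∧ b i x ≤ u) :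
    {x | ∀ i, a i x ≤ x i ∧ x i ≤ b i x}.Nonempty ∧
      IsCompact {x | ∀ i, a i x ≤ x i ∧ x i ≤ b i x} := by
  have hfix : {x | ∀ i, a i x ≤ x i ∧ x i ≤ b i x} = fixedPoints (clampMap a b) :=
    ext fun _ => (isFixedPt_clampMap_iff hle).symm
  have hF := lipschitzWith_clampMap ha hb
  have hbox : IsCompact (univ.pi fun _ : ι => Icc l u) :=
    isCompact_univ_pi fun _ => isCompact_Icc
  have hmaps := clampMap_mem_univ_pi_Icc hle hbdd
  rw [hfix]
  refine ⟨?_, hbox.of_isClosed_subset (isClosed_fixedPoints hF.continuous)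
    fun x hx => hx.eq ▸ hmaps x⟩
  obtain ⟨x, -, hx⟩ := hF.exists_isFixedPt_of_isCompact_of_convex hbox
    (convex_pi fun _ _ => convex_Icc l u)
    (univ_pi_nonempty_iff.2 fun i => nonempty_Icc.2 ((hbdd i 0).1.trans <|
      (hle i 0).trans (hbdd i 0).2))
    (fun x _ => hmaps x)
  exact ⟨x, hx⟩

end BoundSystem

/-- If the 1-Lipschitz bounds `r̲ᵢ ≤ r̄ᵢ` are uniformly bounded (below and above resp.),
then `Q = { x | r̲ᵢ(x̂ᵢ) ≤ xᵢ ≤ r̄ᵢ(x̂ᵢ) for all i }` is nonempty and compact. -/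
theorem bounded_system_nonempty_compact {n : ℕ}
    (rlo rhi : Fin (n + 1) → (Fin n → ℝ) → ℝ)
    (hlo : ∀ i, LipschitzWith 1 (rlo i)) (hhi : ∀ i, LipschitzWith 1 (rhi i))
    (hle : ∀ i (y : Fin n → ℝ), rlo i y ≤ rhi i y)
    (l u : ℝ) (hbdd : ∀ i (y : Fin n → ℝ), l ≤ rlo i y ∧ rhi i y ≤ u) :
    ({x : Fin (n + 1) → ℝ | ∀ i : Fin (n + 1),
        rlo i (x ∘ i.succAbove) ≤ x i ∧ x i ≤ rhi i (x ∘ i.succAbove)}).Nonempty ∧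
    IsCompact {x : Fin (n + 1) → ℝ | ∀ i : Fin (n + 1),
        rlo i (x ∘ i.succAbove) ≤ x i ∧ x i ≤ rhi i (x ∘ i.succAbove)} :=
  nonempty_and_isCompact_setOf_bounds
    (a := fun i x => rlo i (x ∘ i.succAbove)) (b := fun i x => rhi i (x ∘ i.succAbove))
    (fun i => by simpa [comp_def] using (hlo i).comp (Pi.lipschitzWith_precomp i.succAbove))
    (fun i => by simpa [comp_def] using (hhi i).comp (Pi.lipschitzWith_precomp i.succAbove))
    (fun i _ => hle i _) (fun i _ => hbdd i _)
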